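/- Let dμ be a measure on ℝ with compact infinite support, p_n its orthonormal polynomials with Jacobi coefficients a_n, and let x₀ ∉ supp(dμ) with d = dist(x₀, supp dμ) > 0. Set δ_n = d²/(d + √2·a_{n+1}). Then at least one of p_n, p_{n+1} has no zeros in the interval (x₀ − δ_n, x₀ + δ_n). -/

import Mathlib

open MeasureTheory Polynomial

def measSupport (μ : Measure ℝ) : Set ℝ :=
  {x | ∀ ε > 0, 0 < μ (Metric.ball x ε)}

/-!
Suppose `p_n(z) = 0 = p_{n+1}(w)` with `|z - x₀|, |w - x₀| < δ`, and write `p_n = (x - z) q`,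
`p_{n+1} = (x - w) r`. Since `r` has degree `n` and the recursion gives
`κ_n = a_{n+1} κ_{n+1}` for the leading coefficients `κ_k`, `a_{n+1} ⟨p_n, r⟩ = 1`; and
`p_n r = p_{n+1} q + (w - z) q r` gives `⟨p_n, r⟩ = (w - z) ⟨q, r⟩`. Hence
`a_{n+1} |w - z| |⟨q, r⟩| = 1`.

On the other hand `(x - x₀)² ≥ d²` on the support. With `A = z - x₀`, `B = w - x₀`,
`s = √(d² - A²)`, `t = √(d² - B²)`, the integral of
`((x - x₀)² - d²) (l q + r)² + (l s q - t r)²` is nonnegative, and by orthonormality it equals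
`l² - 2 l c ⟨q, r⟩ + 1` with `c = t² + s t`. So `|c ⟨q, r⟩| ≤ 1`, while
`a_{n+1} |w - z| < 2 a_{n+1} δ ≤ 2 (d² - δ²) < c`.
-/

theorem measSupport_eq_support (μ : Measure ℝ) : measSupport μ = μ.support := by
  ext x
  rw [Metric.nhds_basis_ball.mem_measureSupport]
  rfl

theorem ae_infDist_measSupport_le (μ : Measure ℝ) (x₀ : ℝ) :
    ∀ᵐ x ∂μ, Metric.infDist x₀ (measSupport μ) ≤ |x - x₀| := by
  filter_upwards [μ.support_mem_ae] with x hx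
  rw [← measSupport_eq_support] at hx
  rw [← Real.dist_eq, dist_comm]
  exact Metric.infDist_le_dist_of_mem hx

theorem integrable_eval_of_integrable_abs_pow {μ : Measure ℝ}
    (hmom : ∀ n : ℕ, Integrable (fun x : ℝ => |x| ^ n) μ) (f : ℝ[X]) :
    Integrable (fun x => f.eval x) μ := by
  induction f using Polynomial.induction_on' with
  | add f g hf hg => simp only [eval_add]; exact hf.add hg
  | monomial k c =>
    have hpow : Integrable (fun x : ℝ => x ^ k) μ :=
      (hmom k).mono' (continuous_pow k).aestronglyMeasurable (ae_of_all _ fun x => by simp)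
    simpa only [eval_monomial] using hpow.const_mul c

theorem degree_lt_of_X_sub_C_mul_eq {P q : ℝ[X]} {z : ℝ} (hP : P ≠ 0)
    (h : (X - C z) * q = P) : q.degree < P.degree := by
  have hq : q ≠ 0 := right_ne_zero_of_mul (h ▸ hP)
  apply degree_lt_degree
  rw [← h, natDegree_mul (X_sub_C_ne_zero z) hq, natDegree_X_sub_C]
  omega

theorem leadingCoeff_eq_mul_leadingCoeff_succ {p : ℕ → ℝ[X]} {a b : ℕ → ℝ}
    (hdeg : ∀ k, (p k).natDegree = k)
    (hrec : ∀ k x, x * (p k).eval x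
      = a (k + 1) * (p (k + 1)).eval x + b (k + 1) * (p k).eval x
        + (if k = 0 then 0 else a k * (p (k - 1)).eval x)) (n : ℕ) :
    (p n).leadingCoeff = a (n + 1) * (p (n + 1)).leadingCoeff := by
  have hpoly : X * p n = C (a (n + 1)) * p (n + 1) + C (b (n + 1)) * p n
      + (if n = 0 then 0 else C (a n) * p (n - 1)) := by
    apply Polynomial.funext
    intro x
    split_ifs with hn <;> simp [hrec, hn]
  have hzero : ∀ k m, k < m → (p k).coeff m = 0 := fun k m h =>
    coeff_eq_zero_of_natDegree_lt (by rw [hdeg]; exact h)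
  have hcoeff := congrArg (coeff · (n + 1)) hpoly
  rw [leadingCoeff, leadingCoeff, hdeg, hdeg]
  split_ifs at hcoeff <;>
    simpa [coeff_X_mul, hzero n (n + 1) (by omega), hzero (n - 1) (n + 1) (by omega)] using hcoeff

noncomputable def polyIntegral (μ : Measure ℝ)
    (hint : ∀ f : ℝ[X], Integrable (fun x => f.eval x) μ) : ℝ[X] →ₗ[ℝ] ℝ where
  toFun f := ∫ x, f.eval x ∂μ
  map_add' f g := by simp only [eval_add]; exact integral_add (hint f) (hint g)
  map_smul' c f := by
    simp only [eval_smul, smul_eq_mul, RingHom.id_apply]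
    exact integral_const_mul c _

section polyIntegral

variable {μ : Measure ℝ} {hint : ∀ f : ℝ[X], Integrable (fun x => f.eval x) μ}

@[simp]
theorem polyIntegral_apply (f : ℝ[X]) : polyIntegral μ hint f = ∫ x, f.eval x ∂μ := rfl

theorem polyIntegral_mul_self_nonneg (f : ℝ[X]) :
    0 ≤ polyIntegral μ hint (f * f) := by
  refine integral_nonneg fun x => ?_
  simp only [eval_mul]
  exact mul_self_nonneg _

theorem polyIntegral_gap_nonneg (x₀ : ℝ) (f : ℝ[X]) :
    0 ≤ polyIntegral μ hint
      (((X - C x₀) ^ 2 - C (Metric.infDist x₀ (measSupport μ) ^ 2)) * (f * f)) := by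
  refine integral_nonneg_of_ae ?_
  filter_upwards [ae_infDist_measSupport_le μ x₀] with x hx
  have hsq : Metric.infDist x₀ (measSupport μ) ^ 2 ≤ (x - x₀) ^ 2 := by
    rw [← sq_abs (x - x₀)]
    exact pow_le_pow_left₀ Metric.infDist_nonneg hx 2
  simp only [eval_mul, eval_sub, eval_pow, eval_X, eval_C, Pi.zero_apply]
  exact mul_nonneg (sub_nonneg.2 hsq) (mul_self_nonneg _)

end polyIntegral

theorem LinearMap.map_C_mul (L : ℝ[X] →ₗ[ℝ] ℝ) (c : ℝ) (f : ℝ[X]) : L (C c * f) = c * L f := by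
  rw [← smul_eq_C_mul, map_smul, smul_eq_mul]

section MomentFunctional

variable {L : ℝ[X] →ₗ[ℝ] ℝ} {p : ℕ → ℝ[X]}

theorem apply_mul_eq_zero_of_degree_lt (hdeg : ∀ k, (p k).degree = k)
    (horth : ∀ j k, j ≠ k → L (p j * p k) = 0) {k : ℕ} {g : ℝ[X]} (hg : g.degree < k) :
    L (p k * g) = 0 := by
  let S : Sequence ℝ := ⟨p, hdeg⟩
  have hspan :
      Submodule.span ℝ (p '' Set.Iio k) ≤ LinearMap.ker (L ∘ₗ LinearMap.mulLeft ℝ (p k)) := by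
    rw [Submodule.span_le]
    rintro _ ⟨j, hj, rfl⟩
    exact horth k j (ne_of_gt hj)
  have hmem : g ∈ Submodule.span ℝ (p '' Set.Iio k) := by
    rw [S.span_degreeLT fun i _ => isUnit_iff_ne_zero.2 (leadingCoeff_ne_zero.2 (S.ne_zero i))]
    exact mem_degreeLT.2 hg
  exact hspan hmem

theorem apply_mul_eq_coeff_div (hdeg : ∀ k, (p k).degree = k)
    (horth : ∀ j k, L (p j * p k) = if j = k then 1 else 0) {n : ℕ} {g : ℝ[X]}
    (hg : g.degree ≤ n) : L (p n * g) = g.coeff n / (p n).leadingCoeff := by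
  have hκ : (p n).leadingCoeff ≠ 0 :=
    leadingCoeff_ne_zero.2 (ne_zero_of_coe_le_degree (hdeg n).ge)
  have hκn : (p n).coeff n = (p n).leadingCoeff := by
    rw [leadingCoeff, natDegree_eq_of_degree_eq_some (hdeg n)]
  set c := g.coeff n / (p n).leadingCoeff
  have hlow : (g - C c * p n).degree < n := by
    rw [degree_lt_iff_coeff_zero]
    intro m hm
    rcases hm.eq_or_lt with rfl | hm
    · rw [coeff_sub, coeff_C_mul, hκn, div_mul_cancel₀ _ hκ, sub_self]
    · rw [coeff_sub, coeff_C_mul, coeff_eq_zero_of_degree_lt (hg.trans_lt (by exact_mod_cast hm)),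
        coeff_eq_zero_of_degree_lt (by rw [hdeg]; exact_mod_cast hm), mul_zero, sub_zero]
  have hsplit : p n * g = p n * (g - C c * p n) + C c * (p n * p n) := by ring
  rw [hsplit, map_add, L.map_C_mul, horth, if_pos rfl, mul_one,
    apply_mul_eq_zero_of_degree_lt hdeg (fun j k h => by rw [horth, if_neg h]) hlow, zero_add]

theorem mul_apply_mul_quotient_eq_one (hdeg : ∀ k, (p k).degree = k)
    (horth : ∀ j k, L (p j * p k) = if j = k then 1 else 0) {n : ℕ} {c : ℝ}
    (hlc : (p n).leadingCoeff = c * (p (n + 1)).leadingCoeff) {w : ℝ} {r : ℝ[X]}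
    (hr : (X - C w) * r = p (n + 1)) :
    c * L (p n * r) = 1 := by
  have hpn1 : p (n + 1) ≠ 0 := ne_zero_of_coe_le_degree (hdeg (n + 1)).ge
  have hrdeg : r.natDegree = n := by
    have h := natDegree_eq_of_degree_eq_some (hdeg (n + 1))
    rw [← hr, natDegree_mul (X_sub_C_ne_zero w) (right_ne_zero_of_mul (hr ▸ hpn1)),
      natDegree_X_sub_C] at h
    omega
  have hrn : r.coeff n = (p (n + 1)).leadingCoeff := by
    rw [← hr, leadingCoeff_mul, leadingCoeff_X_sub_C, one_mul, leadingCoeff, hrdeg]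
  have hc : c ≠ 0 := by
    rintro rfl
    rw [zero_mul, leadingCoeff_eq_zero] at hlc
    exact ne_zero_of_coe_le_degree (hdeg n).ge hlc
  have hcr : (C c * r).degree ≤ n := by
    rw [degree_C_mul hc]
    exact degree_le_of_natDegree_le hrdeg.le
  rw [← L.map_C_mul, mul_left_comm, apply_mul_eq_coeff_div hdeg horth hcr, coeff_C_mul, hrn, hlc,
    div_self]
  exact mul_ne_zero hc (leadingCoeff_ne_zero.2 hpn1)

theorem apply_mul_quotient_eq (hdeg : ∀ k, (p k).degree = k)
    (horth : ∀ j k, j ≠ k → L (p j * p k) = 0) {n : ℕ} {z w : ℝ} {q r : ℝ[X]}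
    (hq : (X - C z) * q = p n) (hr : (X - C w) * r = p (n + 1)) :
    L (p n * r) = (w - z) * L (q * r) := by
  have hqdeg : q.degree < ↑(n + 1) := by
    refine (degree_lt_of_X_sub_C_mul_eq (ne_zero_of_coe_le_degree (hdeg n).ge) hq).trans ?_
    rw [hdeg]
    exact_mod_cast n.lt_succ_self
  have hsplit : p n * r = p (n + 1) * q + C (w - z) * (q * r) := by
    rw [← hq, ← hr, C_sub]
    ring
  rw [hsplit, map_add, apply_mul_eq_zero_of_degree_lt hdeg horth hqdeg, L.map_C_mul, zero_add]

theorem sq_mul_apply_mul_le_one (hdeg : ∀ k, (p k).degree = k)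
    (horth : ∀ j k, L (p j * p k) = if j = k then 1 else 0) (hsq : ∀ f, 0 ≤ L (f * f))
    {x₀ d : ℝ} (hgap : ∀ f, 0 ≤ L (((X - C x₀) ^ 2 - C (d ^ 2)) * (f * f)))
    {n : ℕ} {z w : ℝ} {q r : ℝ[X]} (hq : (X - C z) * q = p n) (hr : (X - C w) * r = p (n + 1))
    (hz : |z - x₀| ≤ d) (hw : |w - x₀| ≤ d) :
    ((d ^ 2 - (w - x₀) ^ 2 + √(d ^ 2 - (z - x₀) ^ 2) * √(d ^ 2 - (w - x₀) ^ 2))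
      * L (q * r)) ^ 2 ≤ 1 := by
  have horth' : ∀ j k, j ≠ k → L (p j * p k) = 0 := fun j k h => by rw [horth, if_neg h]
  have hs := Real.sq_sqrt (sub_nonneg.2 (sq_le_sq' (abs_le.1 hz).1 (abs_le.1 hz).2))
  have ht := Real.sq_sqrt (sub_nonneg.2 (sq_le_sq' (abs_le.1 hw).1 (abs_le.1 hw).2))
  set s := √(d ^ 2 - (z - x₀) ^ 2)
  set t := √(d ^ 2 - (w - x₀) ^ 2)
  set T := L (q * r)
  set l := (d ^ 2 - (w - x₀) ^ 2 + s * t) * T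
  have hqn : q.degree < n :=
    hdeg n ▸ degree_lt_of_X_sub_C_mul_eq (ne_zero_of_coe_le_degree (hdeg n).ge) hq
  have hqn1 : q.degree < ↑(n + 1) := hqn.trans (by exact_mod_cast n.lt_succ_self)
  have hrn1 : r.degree < ↑(n + 1) :=
    hdeg (n + 1) ▸ degree_lt_of_X_sub_C_mul_eq (ne_zero_of_coe_le_degree (hdeg (n + 1)).ge) hr
  -- `s` and `t` are chosen so that no `q * q` or `r * r` term survives
  have hexpand : ((X - C x₀) ^ 2 - C (d ^ 2)) * ((C l * q + r) * (C l * q + r))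
        + (C (l * s) * q - C t * r) * (C (l * s) * q - C t * r)
      = C (l ^ 2) * (p n * p n) + C (2 * l) * (p n * p (n + 1)) + p (n + 1) * p (n + 1)
        + C (2 * l ^ 2 * (z - x₀)) * (p n * q) + C (2 * l * (w - x₀)) * (p n * r)
        + C (2 * l * (z - x₀)) * (p (n + 1) * q) + C (2 * (w - x₀)) * (p (n + 1) * r)
        - C (2 * l * (d ^ 2 - (z - x₀) * (w - x₀) + s * t)) * (q * r) := by
    rw [← hq, ← hr]
    apply Polynomial.funext
    intro x
    simp only [eval_add, eval_sub, eval_mul, eval_pow, eval_C, eval_X]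
    linear_combination (l ^ 2 * q.eval x ^ 2) * hs + r.eval x ^ 2 * ht
  have hpos := add_nonneg (hgap (C l * q + r)) (hsq (C (l * s) * q - C t * r))
  rw [← map_add, hexpand] at hpos
  simp only [map_add, map_sub, L.map_C_mul] at hpos
  rw [horth, horth, horth, if_pos rfl, if_pos rfl, if_neg (Nat.succ_ne_self n).symm,
    apply_mul_eq_zero_of_degree_lt hdeg horth' hqn,
    apply_mul_eq_zero_of_degree_lt hdeg horth' hqn1,
    apply_mul_eq_zero_of_degree_lt hdeg horth' hrn1,
    apply_mul_quotient_eq hdeg horth' hq hr] at hpos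
  linear_combination hpos

end MomentFunctional

theorem sq_div_add_lt {a d : ℝ} (ha : 0 < a) (hd : 0 < d) : d ^ 2 / (d + √2 * a) < d := by
  have hsa : 0 < √2 * a := mul_pos (Real.sqrt_pos.2 two_pos) ha
  rw [div_lt_iff₀ (by positivity)]
  nlinarith [mul_pos hd hsa]

theorem mul_abs_sub_lt {a d δ A B : ℝ} (ha : 0 < a) (hd : 0 < d)
    (hδ : δ = d ^ 2 / (d + √2 * a)) (hA : |A| < δ) (hB : |B| < δ) :
    a * |B - A| < d ^ 2 - B ^ 2 + √(d ^ 2 - A ^ 2) * √(d ^ 2 - B ^ 2) := by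
  have hδd : δ < d := hδ ▸ sq_div_add_lt ha hd
  have hδpos : 0 < δ := (abs_nonneg A).trans_lt hA
  have hδa : a * δ ≤ d ^ 2 - δ ^ 2 := by
    have hdef : δ * (d + √2 * a) = d ^ 2 := by
      rw [hδ]
      field_simp
    have hs : 1 ≤ √2 := Real.one_le_sqrt.2 one_le_two
    nlinarith [mul_nonneg (mul_nonneg (sub_nonneg.2 hs) ha.le) hδpos.le,
      mul_pos hδpos (sub_pos.2 hδd)]
  have hA2 : A ^ 2 < δ ^ 2 := sq_lt_sq' (abs_lt.1 hA).1 (abs_lt.1 hA).2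
  have hB2 : B ^ 2 < δ ^ 2 := sq_lt_sq' (abs_lt.1 hB).1 (abs_lt.1 hB).2
  have hprod : d ^ 2 - δ ^ 2 < √(d ^ 2 - A ^ 2) * √(d ^ 2 - B ^ 2) := by
    rw [← Real.sqrt_mul (by nlinarith), Real.lt_sqrt (by nlinarith), sq]
    exact mul_lt_mul'' (by linarith) (by linarith) (by nlinarith) (by nlinarith)
  calc a * |B - A| ≤ a * (|B| + |A|) := mul_le_mul_of_nonneg_left (abs_sub _ _) ha.le
    _ < a * (2 * δ) := by gcongr; linarith
    _ ≤ 2 * (d ^ 2 - δ ^ 2) := by linarith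
    _ < d ^ 2 - B ^ 2 + √(d ^ 2 - A ^ 2) * √(d ^ 2 - B ^ 2) := by linarith

theorem one_lt_sq_mul_of_mul_eq_one {a u c T : ℝ} (ha : 0 ≤ a) (h : a * (u * T) = 1)
    (hlt : a * |u| < c) : 1 < (c * T) ^ 2 := by
  have hT : T ≠ 0 := by
    rintro rfl
    simp at h
  calc (1 : ℝ) = (a * |u|) ^ 2 * T ^ 2 := by rw [mul_pow a, sq_abs, ← one_pow 2, ← h]; ring
    _ < c ^ 2 * T ^ 2 := by gcongr
    _ = (c * T) ^ 2 := by ring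

theorem stmt_6_general (μ : Measure ℝ)
    (hmom : ∀ n : ℕ, Integrable (fun x : ℝ => |x| ^ n) μ)
    (p : ℕ → Polynomial ℝ) (a b : ℕ → ℝ)
    (ha : ∀ k, 0 < a k)
    (hdeg : ∀ k, (p k).natDegree = k)
    (hlead : ∀ k, 0 < (p k).leadingCoeff)
    (horth : ∀ k m, ∫ x, (p k).eval x * (p m).eval x ∂μ = if k = m then 1 else 0)
    (hrec : ∀ k x, x * (p k).eval x
      = a (k + 1) * (p (k + 1)).eval x + b (k + 1) * (p k).eval x
        + (if k = 0 then 0 else a k * (p (k - 1)).eval x))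
    (x₀ : ℝ)
    (d : ℝ) (hd : d = Metric.infDist x₀ (measSupport μ)) (hdpos : 0 < d)
    (n : ℕ) (δ : ℝ) (hδ : δ = d ^ 2 / (d + Real.sqrt 2 * a (n + 1))) :
    (∀ x ∈ Set.Ioo (x₀ - δ) (x₀ + δ), (p n).eval x ≠ 0) ∨
    (∀ x ∈ Set.Ioo (x₀ - δ) (x₀ + δ), (p (n + 1)).eval x ≠ 0) := by
  set L := polyIntegral μ (integrable_eval_of_integrable_abs_pow hmom)
  have hdeg' : ∀ k, (p k).degree = k := fun k =>
    (degree_eq_iff_natDegree_eq (leadingCoeff_ne_zero.1 (hlead k).ne')).2 (hdeg k)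
  have horth' : ∀ j k, L (p j * p k) = if j = k then 1 else 0 := fun j k => by
    simp only [L, polyIntegral_apply, eval_mul, horth]
  have hgap : ∀ f, 0 ≤ L (((X - C x₀) ^ 2 - C (d ^ 2)) * (f * f)) := fun f =>
    hd ▸ polyIntegral_gap_nonneg x₀ f
  by_contra! ⟨⟨z, hz, hpz⟩, ⟨w, hw, hpw⟩⟩
  have hq := mul_divByMonic_eq_iff_isRoot.2 hpz
  have hr := mul_divByMonic_eq_iff_isRoot.2 hpw
  have hδd : δ < d := hδ ▸ sq_div_add_lt (ha (n + 1)) hdpos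
  have hz' : |z - x₀| < δ := abs_sub_lt_iff.2 ⟨by linarith [hz.2], by linarith [hz.1]⟩
  have hw' : |w - x₀| < δ := abs_sub_lt_iff.2 ⟨by linarith [hw.2], by linarith [hw.1]⟩
  have hnorm := mul_apply_mul_quotient_eq_one hdeg' horth'
    (leadingCoeff_eq_mul_leadingCoeff_succ hdeg hrec n) hr
  rw [apply_mul_quotient_eq hdeg' (fun j k h => by rw [horth', if_neg h]) hq hr] at hnorm
  have hquad := sq_mul_apply_mul_le_one hdeg' horth' polyIntegral_mul_self_nonneg hgap hq hr
    (hz'.trans hδd).le (hw'.trans hδd).le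
  have hlt := mul_abs_sub_lt (ha (n + 1)) hdpos hδ hz' hw'
  rw [sub_sub_sub_cancel_right] at hlt
  exact absurd hquad (not_le.2 (one_lt_sq_mul_of_mul_eq_one (ha _).le hnorm hlt))

/-- Theorem 1: if `d = dist(x₀, supp μ) > 0` and `δ_n = d²/(d + √2 a_{n+1})`, then
at least one of `p_n`, `p_{n+1}` has no zeros in `(x₀ − δ_n, x₀ + δ_n)`. -/
theorem stmt_6 (μ : Measure ℝ)
    (hmom : ∀ n : ℕ, Integrable (fun x : ℝ => |x| ^ n) μ)
    (hcpt : IsCompact (measSupport μ))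
    (hinf : (measSupport μ).Infinite)
    (p : ℕ → Polynomial ℝ) (a b : ℕ → ℝ)
    (ha : ∀ k, 0 < a k)
    (hdeg : ∀ k, (p k).natDegree = k)
    (hlead : ∀ k, 0 < (p k).leadingCoeff)
    (horth : ∀ k m, ∫ x, (p k).eval x * (p m).eval x ∂μ = if k = m then 1 else 0)
    (hrec : ∀ k x, x * (p k).eval x
      = a (k + 1) * (p (k + 1)).eval x + b (k + 1) * (p k).eval x
        + (if k = 0 then 0 else a k * (p (k - 1)).eval x))
    (x₀ : ℝ) (hx₀ : x₀ ∉ measSupport μ)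
    (d : ℝ) (hd : d = Metric.infDist x₀ (measSupport μ)) (hdpos : 0 < d)
    (n : ℕ) (δ : ℝ) (hδ : δ = d ^ 2 / (d + Real.sqrt 2 * a (n + 1))) :
    (∀ x ∈ Set.Ioo (x₀ - δ) (x₀ + δ), (p n).eval x ≠ 0) ∨
    (∀ x ∈ Set.Ioo (x₀ - δ) (x₀ + δ), (p (n + 1)).eval x ≠ 0) :=
  stmt_6_general μ hmom p a b ha hdeg hlead horth hrec x₀ d hd hdpos n δ hδ
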